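/- Let P be a pMDP over states S and actions A, with region r (bounds a, b) well-defined for P, T ⊆ S a target set, s₀ ∈ S and λ ∈ ℝ. For u ∈ r let Vmax(u) be the maximal reachability value vector of the MDP whose rows at each s ∉ T are { (s' ↦ P u s α s') | α ∈ Act(s) }, assumed to exist. Let w be the pointwise-least nonnegative function on S ⊕ (S × A) satisfying: w (Sum.inl s) = 1 for s ∈ T; w (Sum.inl s) = max_{α ∈ Act(s)} w (Sum.inr (s, α)) for s ∉ T; w (Sum.inr (s, α)) = min over vertices v of r of ∑_{s'} P v s α s' · w (Sum.inl s') for α ∈ Act(s); and w (Sum.inr (s, α)) = 0 for α ∉ Act(s); assumed to exist (w is the value of the stochastic game in which player 1 maximizes over enabled actions and player 2 minimizes over vertex valuations). If w (Sum.inl s₀) > λ, then Vmax(u) s₀ > λ for every u ∈ r. -/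
import Mathlib


open Finset

/-- A multi-affine function on valuations. -/
def MultiAffine {V : Type*} [DecidableEq V] (f : (V → ℝ) → ℝ) : Prop :=
  ∀ (x : V) (u : V → ℝ), ∃ c d : ℝ, ∀ t : ℝ, f (Function.update u x t) = c * t + d

/-- Membership of a valuation in the region with bounds `a`, `b`. -/
def InRegion {V : Type*} (a b u : V → ℝ) : Prop := ∀ x, a x ≤ u x ∧ u x ≤ b x

/-- A vertex of the region with bounds `a`, `b`. -/
def IsVertex {V : Type*} (a b v : V → ℝ) : Prop := ∀ x, v x = a x ∨ v x = b x

/-- The region with bounds `a`, `b` is well-defined for the pMDP `(Act, P)`. -/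
def PMDPWellDef {V S A : Type*} [Fintype S] (Act : S → Set A)
    (P : (V → ℝ) → S → A → S → ℝ) (a b : V → ℝ) : Prop :=
  (∀ u, InRegion a b u → ∀ s, ∀ α ∈ Act s,
      (∀ s', 0 ≤ P u s α s') ∧ ∑ s', P u s α s' = 1) ∧
    ∀ s, ∀ α ∈ Act s, ∀ s',
      (∀ u, InRegion a b u → P u s α s' = 0) ∨ ∀ u, InRegion a b u → 0 < P u s α s'

/-- The rows of the MDP obtained by instantiating the pMDP at valuation `u`. -/
def ActRows {V S A : Type*} (Act : S → Set A) (P : (V → ℝ) → S → A → S → ℝ)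
    (u : V → ℝ) (s : S) : Set (S → ℝ) :=
  {row | ∃ α ∈ Act s, row = fun s' => P u s α s'}

/-- A solution of the maximal-reachability equation system of an MDP given by `Rows`. -/
def MaxSol {S : Type*} [Fintype S] (Rows : S → Set (S → ℝ)) (T : Set S) (v : S → ℝ) :
    Prop :=
  (∀ s, 0 ≤ v s) ∧ (∀ s ∈ T, v s = 1) ∧
    ∀ s ∉ T, IsGreatest ((fun row => ∑ s', row s' * v s') '' Rows s) (v s)

/-- `v` is the maximal reachability value vector: the pointwise-least such solution. -/
def IsMaxVec {S : Type*} [Fintype S] (Rows : S → Set (S → ℝ)) (T : Set S) (v : S → ℝ) :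
    Prop :=
  MaxSol Rows T v ∧ ∀ v', MaxSol Rows T v' → ∀ s, v s ≤ v' s

/-- A solution of the equation system of the substitution stochastic game in which the
player choosing enabled actions maximizes while the player choosing vertex valuations
minimizes. -/
def GameSolMaxMin {V S A : Type*} [Fintype S] (Act : S → Set A) (T : Set S)
    (a b : V → ℝ) (P : (V → ℝ) → S → A → S → ℝ) (w : S ⊕ (S × A) → ℝ) : Prop :=
  (∀ t, 0 ≤ w t) ∧
    (∀ s ∈ T, w (Sum.inl s) = 1) ∧
    (∀ s ∉ T, IsGreatest ((fun α => w (Sum.inr (s, α))) '' Act s) (w (Sum.inl s))) ∧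
    (∀ s, ∀ α ∈ Act s,
      IsLeast ((fun v => ∑ s', P v s α s' * w (Sum.inl s')) '' {v | IsVertex a b v})
        (w (Sum.inr (s, α)))) ∧
    ∀ s α, α ∉ Act s → w (Sum.inr (s, α)) = 0

lemma vertex_nonempty {V : Type*} (a b : V → ℝ) : {v : V → ℝ | IsVertex a b v}.Nonempty :=
  ⟨a, fun _ => Or.inl rfl⟩

lemma vertex_finite {V : Type*} [Fintype V] (a b : V → ℝ) :
    {v : V → ℝ | IsVertex a b v}.Finite := by
  refine (Set.Finite.pi (fun x : V => (Set.finite_singleton (b x)).insert (a x))).subset ?_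
  intro v hv x _
  rcases hv x with h | h <;> simp [h]

lemma vertex_inRegion {V : Type*} {a b v : V → ℝ} (hab : ∀ x, a x ≤ b x)
    (hv : IsVertex a b v) : InRegion a b v := by
  intro x
  rcases hv x with h | h <;> rw [h] <;> exact ⟨by simp [hab x], by simp [hab x]⟩

lemma multiAffine_sum {V S : Type*} [DecidableEq V] [Fintype S]
    (g : (V → ℝ) → S → ℝ) (hg : ∀ s, MultiAffine fun u => g u s) (cs : S → ℝ) :
    MultiAffine fun u => ∑ s, g u s * cs s := by
  intro x u
  choose c d h using fun s => hg s x u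
  refine ⟨∑ s, c s * cs s, ∑ s, d s * cs s, fun t => ?_⟩
  rw [Finset.sum_mul, ← Finset.sum_add_distrib]
  refine Finset.sum_congr rfl fun s _ => ?_
  have hs : g (Function.update u x t) s = c s * t + d s := h s t
  rw [hs]; ring

lemma exists_vertex_le {V : Type*} [Fintype V] [DecidableEq V]
    {a b u : V → ℝ} (hu : InRegion a b u)
    {f : (V → ℝ) → ℝ} (hf : MultiAffine f) :
    ∃ v, IsVertex a b v ∧ f v ≤ f u := by
  have key : ∀ s : Finset V, ∃ v : V → ℝ,
      (∀ x ∈ s, v x = a x ∨ v x = b x) ∧ (∀ x ∉ s, v x = u x) ∧ f v ≤ f u := by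
    intro s
    induction s using Finset.induction_on with
    | empty => exact ⟨u, by simp, fun _ _ => rfl, le_refl _⟩
    | @insert x s hx ih =>
      obtain ⟨v, hv1, hv2, hv3⟩ := ih
      obtain ⟨cc, dd, hcd⟩ := hf x v
      have hvx : v x = u x := hv2 x hx
      set t : ℝ := if 0 ≤ cc then a x else b x with ht
      have h1 : cc * t + dd ≤ cc * u x + dd := by
        rw [ht]
        split_ifs with h
        · have := mul_le_mul_of_nonneg_left (hu x).1 h
          linarith
        · have := mul_le_mul_of_nonpos_left (hu x).2 (le_of_lt (not_le.mp h))
          linarith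
      have h2 : f (Function.update v x t) ≤ f v := by
        rw [hcd t]
        calc cc * t + dd ≤ cc * u x + dd := h1
          _ = f (Function.update v x (u x)) := (hcd (u x)).symm
          _ = f v := by rw [← hvx, Function.update_eq_self]
      refine ⟨Function.update v x t, ?_, ?_, h2.trans hv3⟩
      · intro y hy
        rcases Finset.mem_insert.mp hy with rfl | hy'
        · rw [Function.update_self, ht]
          split_ifs
          · exact Or.inl rfl
          · exact Or.inr rfl
        · have : y ≠ x := fun h => hx (h ▸ hy')
          rw [Function.update_of_ne this]
          exact hv1 y hy'
      · intro y hy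
        have hyx : y ≠ x := fun h => hy (h ▸ Finset.mem_insert_self x s)
        rw [Function.update_of_ne hyx]
        exact hv2 y (fun h => hy (Finset.mem_insert_of_mem h))
  obtain ⟨v, h1, _, h3⟩ := key Finset.univ
  exact ⟨v, fun x => h1 x (Finset.mem_univ x), h3⟩

open Classical in
/-- The Bellman operator of the substitution game. -/
noncomputable def gamePhi {V S A : Type*} [Fintype S] (Act : S → Set A) (T : Set S)
    (a b : V → ℝ) (P : (V → ℝ) → S → A → S → ℝ)
    (x : S ⊕ (S × A) → ℝ) : S ⊕ (S × A) → ℝ :=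
  Sum.elim
    (fun s => if s ∈ T then 1 else sSup ((fun α => x (Sum.inr (s, α))) '' Act s))
    (fun p => if p.2 ∈ Act p.1 then
        sInf ((fun v => ∑ s', P v p.1 p.2 s' * x (Sum.inl s')) '' {v | IsVertex a b v})
      else 0)

lemma gamePhi_mono {V S A : Type*} [Fintype S] [Fintype A] [Fintype V]
    (Act : S → Set A) (T : Set S) (a b : V → ℝ)
    (P : (V → ℝ) → S → A → S → ℝ)
    (hPnn : ∀ v, IsVertex a b v → ∀ s, ∀ α ∈ Act s, ∀ s', 0 ≤ P v s α s')
    (hAct : ∀ s, (Act s).Nonempty)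
    {x y : S ⊕ (S × A) → ℝ} (hxy : ∀ t, x t ≤ y t) :
    ∀ t, gamePhi Act T a b P x t ≤ gamePhi Act T a b P y t := by
  rintro (s | ⟨s, α⟩) <;> simp only [gamePhi, Sum.elim_inl, Sum.elim_inr]
  · split_ifs with h
    · exact le_refl _
    · refine csSup_le ((hAct s).image _) ?_
      rintro _ ⟨α, hα, rfl⟩
      exact (hxy _).trans (le_csSup (((Act s).toFinite.image _).bddAbove) ⟨α, hα, rfl⟩)
  · split_ifs with h
    · refine le_csInf ((vertex_nonempty a b).image _) ?_
      rintro _ ⟨v, hv, rfl⟩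
      refine (csInf_le ((vertex_finite a b).image _).bddBelow ⟨v, hv, rfl⟩).trans ?_
      exact Finset.sum_le_sum fun s' _ => mul_le_mul_of_nonneg_left (hxy _) (hPnn v hv s α h s')
    · exact le_refl _

lemma gamePhi_nonneg {V S A : Type*} [Fintype S] [Fintype A] [Fintype V]
    (Act : S → Set A) (T : Set S) (a b : V → ℝ)
    (P : (V → ℝ) → S → A → S → ℝ)
    (hPnn : ∀ v, IsVertex a b v → ∀ s, ∀ α ∈ Act s, ∀ s', 0 ≤ P v s α s')
    (hAct : ∀ s, (Act s).Nonempty)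
    {x : S ⊕ (S × A) → ℝ} (hx : ∀ t, 0 ≤ x t) :
    ∀ t, 0 ≤ gamePhi Act T a b P x t := by
  rintro (s | ⟨s, α⟩) <;> simp only [gamePhi, Sum.elim_inl, Sum.elim_inr]
  · split_ifs with h
    · exact zero_le_one
    · obtain ⟨α, hα⟩ := hAct s
      exact (hx _).trans (le_csSup (((Act s).toFinite.image _).bddAbove) ⟨α, hα, rfl⟩)
  · split_ifs with h
    · refine le_csInf ((vertex_nonempty a b).image _) ?_
      rintro _ ⟨v, hv, rfl⟩
      exact Finset.sum_nonneg fun s' _ => mul_nonneg (hPnn v hv s α h s') (hx _)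
    · exact le_refl _

/-- If the value of the substitution game (player 1 maximizing over actions,
player 2 minimizing over vertex valuations) at `s₀` exceeds `lam`, then the maximal
reachability value of every instantiated MDP over the region exceeds `lam` at `s₀`. -/
theorem substitution_game_lower_bound
    {V S A : Type*} [Fintype V] [Nonempty V] [DecidableEq V]
    [Fintype S] [Nonempty S] [Fintype A]
    (Act : S → Set A) (hAct : ∀ s, (Act s).Nonempty)
    (P : (V → ℝ) → S → A → S → ℝ)
    (hma : ∀ s α s', MultiAffine fun u => P u s α s')
    (a b : V → ℝ) (hab : ∀ x, a x ≤ b x)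
    (hwd : PMDPWellDef Act P a b)
    (T : Set S) (s₀ : S) (lam : ℝ)
    (Vmax : (V → ℝ) → S → ℝ)
    (hVmax : ∀ u, InRegion a b u → IsMaxVec (ActRows Act P u) T (Vmax u))
    (w : S ⊕ (S × A) → ℝ)
    (hw : GameSolMaxMin Act T a b P w ∧
      ∀ w', GameSolMaxMin Act T a b P w' → ∀ t, w t ≤ w' t)
    (hbound : w (Sum.inl s₀) > lam) :
    ∀ u, InRegion a b u → Vmax u s₀ > lam := by
  classical
  intro u hu
  obtain ⟨⟨hVnn, hVT, hVeq⟩, -⟩ := hVmax u hu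
  obtain ⟨-, hwleast⟩ := hw
  set Φ : (S ⊕ (S × A) → ℝ) → S ⊕ (S × A) → ℝ := gamePhi Act T a b P with hΦdef
  have hPnn : ∀ v, IsVertex a b v → ∀ s, ∀ α ∈ Act s, ∀ s', 0 ≤ P v s α s' :=
    fun v hv s α hα s' => (hwd.1 v (vertex_inRegion hab hv) s α hα).1 s'
  set c : S ⊕ (S × A) → ℝ := Sum.elim (Vmax u)
    (fun p => if p.2 ∈ Act p.1 then ∑ s', P u p.1 p.2 s' * Vmax u s' else 0) with hcdef
  have hcnn : ∀ t, 0 ≤ c t := by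
    rintro (s | ⟨s, α⟩) <;> simp only [hcdef, Sum.elim_inl, Sum.elim_inr]
    · exact hVnn s
    · split_ifs with h
      · exact Finset.sum_nonneg fun s' _ => mul_nonneg ((hwd.1 u hu s α h).1 s') (hVnn s')
      · exact le_refl 0
  have hΦc : ∀ t, Φ c t ≤ c t := by
    rintro (s | ⟨s, α⟩) <;>
      simp only [hΦdef, gamePhi, hcdef, Sum.elim_inl, Sum.elim_inr]
    · split_ifs with h
      · exact le_of_eq (hVT s h).symm
      · refine csSup_le ((hAct s).image _) ?_
        rintro _ ⟨α, hα, rfl⟩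
        simp only [if_pos hα]
        exact (hVeq s h).2 ⟨fun s' => P u s α s', ⟨α, hα, rfl⟩, rfl⟩
    · split_ifs with h
      · obtain ⟨v, hv, hle⟩ := exists_vertex_le hu
          (multiAffine_sum (fun v s' => P v s α s') (fun s' => hma s α s') (Vmax u))
        exact (csInf_le ((vertex_finite a b).image _).bddBelow ⟨v, hv, rfl⟩).trans hle
      · exact le_refl 0
  set Pre : Set ((S ⊕ (S × A)) → ℝ) :=
    {x | (∀ t, 0 ≤ x t) ∧ (∀ t, x t ≤ c t) ∧ ∀ t, Φ x t ≤ x t} with hPredef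
  have hcPre : c ∈ Pre := ⟨hcnn, fun t => le_refl _, hΦc⟩
  set xs : (S ⊕ (S × A)) → ℝ := fun t => sInf ((fun x => x t) '' Pre) with hxsdef
  have hne : ∀ t, ((fun x => x t) '' Pre).Nonempty := fun t => ⟨c t, c, hcPre, rfl⟩
  have hbdd : ∀ t, BddBelow ((fun x => x t) '' Pre) := by
    intro t
    refine ⟨0, ?_⟩
    rintro r ⟨x, hx, rfl⟩
    exact hx.1 t
  have hxs_le : ∀ x ∈ Pre, ∀ t, xs t ≤ x t := fun x hx t => csInf_le (hbdd t) ⟨x, hx, rfl⟩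
  have hxs_nn : ∀ t, 0 ≤ xs t := by
    intro t
    refine le_csInf (hne t) ?_
    rintro r ⟨x, hx, rfl⟩
    exact hx.1 t
  have hxs_c : ∀ t, xs t ≤ c t := hxs_le c hcPre
  have hΦxs_le : ∀ t, Φ xs t ≤ xs t := by
    intro t
    refine le_csInf (hne t) ?_
    rintro r ⟨x, hx, rfl⟩
    exact (gamePhi_mono Act T a b P hPnn hAct (hxs_le x hx) t).trans (hx.2.2 t)
  have hΦxsPre : Φ xs ∈ Pre := by
    refine ⟨gamePhi_nonneg Act T a b P hPnn hAct hxs_nn, ?_, ?_⟩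
    · intro t
      exact (gamePhi_mono Act T a b P hPnn hAct hxs_c t).trans (hΦc t)
    · intro t
      exact gamePhi_mono Act T a b P hPnn hAct hΦxs_le t
  have hfix : ∀ t, Φ xs t = xs t := fun t => le_antisymm (hΦxs_le t) (hxs_le _ hΦxsPre t)
  have hgs : GameSolMaxMin Act T a b P xs := by
    refine ⟨hxs_nn, ?_, ?_, ?_, ?_⟩
    · intro s hs
      rw [← hfix (Sum.inl s)]
      simp only [hΦdef, gamePhi, Sum.elim_inl, if_pos hs]
    · intro s hs
      have h := hfix (Sum.inl s)
      simp only [hΦdef, gamePhi, Sum.elim_inl, if_neg hs] at h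
      rw [← h]
      exact ⟨((hAct s).image _).csSup_mem ((Act s).toFinite.image _),
        fun r hr => le_csSup (((Act s).toFinite.image _).bddAbove) hr⟩
    · intro s α hα
      have h := hfix (Sum.inr (s, α))
      simp only [hΦdef, gamePhi, Sum.elim_inr, if_pos hα] at h
      rw [← h]
      exact ⟨((vertex_nonempty a b).image _).csInf_mem ((vertex_finite a b).image _),
        fun r hr => csInf_le (((vertex_finite a b).image _).bddBelow) hr⟩
    · intro s α hα
      have h := hfix (Sum.inr (s, α))
      simp only [hΦdef, gamePhi, Sum.elim_inr, if_neg hα] at h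
      exact h.symm
  calc lam < w (Sum.inl s₀) := hbound
    _ ≤ xs (Sum.inl s₀) := hwleast xs hgs (Sum.inl s₀)
    _ ≤ c (Sum.inl s₀) := hxs_c _
    _ = Vmax u s₀ := by simp [hcdef]
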